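/- Let X be a sequence-form polytope and let A ∈ ℝ^{Σ×Σ} represent a linear map X → co X such that A has all nonnegative entries and, for every decision point j̃ ∈ J and every sequence σ ∈ Σ, there exists an action a ∈ A_{j̃} with A(σ, j̃a) = 0 (the canonical representation of Lemma 1 applied row-wise). Then there exists a matrix B ∈ ℝ^{J×J}_{≥0} such that the pair (A,B) satisfies the UTC constraint system: A(p_j, σ̃) + B(j, p_{σ̃}) = Σ_{a∈A_j} A(ja, σ̃) + Σ_{j̃∈C_{σ̃}} B(j, j̃) for all j ∈ J, σ̃ ∈ Σ; A(∅,∅) = 1; A(∅, σ̃) = 0 for σ̃ ≠ ∅; and A, B ≥ 0, where B(j, p_∅) := 0. -/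

import Mathlib

/-- A tree-form decision problem: sequences `Seq` (observation points, with root `∅`),
decision points `Dp`, where `seqs j` is the set of sequences `ja` for actions `a ∈ A_j`,
`parentSeq j = p_j`, `parentDp σ` the decision point immediately preceding `σ` (none for the root),
`children σ = C_σ`, and `depth` counts the number of decision points above a sequence. -/
structure TFDP where
  Seq : Type
  Dp : Type
  [finSeq : Fintype Seq]
  [decSeq : DecidableEq Seq]
  [finDp : Fintype Dp]
  [decDp : DecidableEq Dp]
  root : Seq
  seqs : Dp → Finset Seq
  parentSeq : Dp → Seq
  parentDp : Seq → Option Dp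
  children : Seq → Finset Dp
  depth : Seq → ℕ
  seqs_nonempty : ∀ j, (seqs j).Nonempty
  mem_children : ∀ σ j, j ∈ children σ ↔ parentSeq j = σ
  parentDp_spec : ∀ σ j, parentDp σ = some j ↔ σ ∈ seqs j
  parentDp_root : parentDp root = none
  depth_root : depth root = 0
  depth_seq : ∀ j, ∀ σ ∈ seqs j, depth σ = depth (parentSeq j) + 1

attribute [instance] TFDP.finSeq TFDP.decSeq TFDP.finDp TFDP.decDp

namespace TFDP

variable (T : TFDP)

/-- The sequence-form polytope `co X`. -/
def poly : Set (T.Seq → ℝ) :=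
  {x | (∀ σ, 0 ≤ x σ) ∧ x T.root = 1 ∧ ∀ j, x (T.parentSeq j) = ∑ σ ∈ T.seqs j, x σ}

/-- The pure (0/1) sequence-form strategies `X`. -/
def pureStrats : Set (T.Seq → ℝ) :=
  {x ∈ T.poly | ∀ σ, x σ = 0 ∨ x σ = 1}

/-- Matrix-vector multiplication for `Seq × Seq` matrices. -/
def mulVec (A : T.Seq → T.Seq → ℝ) (x : T.Seq → ℝ) : T.Seq → ℝ :=
  fun σ => ∑ σ' : T.Seq, A σ σ' * x σ'

/-- `B(j, p_σ)`, with the convention `B(j, p_∅) := 0`. -/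
def Bp (B : T.Dp → T.Dp → ℝ) (j : T.Dp) (σ : T.Seq) : ℝ :=
  (T.parentDp σ).elim 0 (B j)

/-- The UTC constraint system for a pair `(A, B)`. -/
def UTC (A : T.Seq → T.Seq → ℝ) (B : T.Dp → T.Dp → ℝ) : Prop :=
  (∀ (j : T.Dp) (σ' : T.Seq),
      A (T.parentSeq j) σ' + T.Bp B j σ'
        = (∑ σ ∈ T.seqs j, A σ σ') + ∑ j' ∈ T.children σ', B j j')
  ∧ A T.root T.root = 1
  ∧ (∀ σ', σ' ≠ T.root → A T.root σ' = 0)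
  ∧ (∀ σ σ', 0 ≤ A σ σ')
  ∧ (∀ j j', 0 ≤ B j j')

end TFDP

/-!
Fix for every row `σ` of `A` a choice of action `c_σ j ∈ A_j` at each decision point with
`A(σ, c_σ j) = 0`. Since `A` maps pure strategies into `co X`, the root row takes the value `1` and
the row `v_j = A(p_j) - Σ_{a ∈ A_j} A(ja)` the value `0` on every pure strategy.

Let `v` be constant on pure strategies and `c` a choice of actions. The sum of `v` over the
`c`-subtree of a sequence is that constant for the root, `0` for any other sequence without a parent
decision point, and the same for all sequences `ja` with the same `j`: two pure strategies that
differ only in the action taken at a reached `j` differ by exactly the two subtrees. Splitting the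
subtree of `σ̃` into `σ̃` and the subtrees below its children yields the UTC equation for
`B(j, j') := -v_j(c-subtree of c j')` with `c = c_{p_j}`. As `A(p_j)` vanishes on that subtree,
`B(j, j')` is the sum of the rows `A(ja)` over it, hence nonnegative.
-/

namespace TFDP

variable {T : TFDP}

theorem parentDp_eq_some_of_mem {j : T.Dp} {σ : T.Seq} (h : σ ∈ T.seqs j) :
    T.parentDp σ = some j :=
  (T.parentDp_spec σ j).2 h

theorem eq_of_mem_seqs {j j' : T.Dp} {σ : T.Seq} (h : σ ∈ T.seqs j) (h' : σ ∈ T.seqs j') :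
    j = j' :=
  Option.some_injective _ ((parentDp_eq_some_of_mem h).symm.trans (parentDp_eq_some_of_mem h'))

theorem depth_parentSeq_lt {j : T.Dp} {σ : T.Seq} (h : σ ∈ T.seqs j) :
    T.depth (T.parentSeq j) < T.depth σ := by
  rw [T.depth_seq j σ h]
  exact Nat.lt_succ_self _

@[elab_as_elim]
theorem seq_induction {motive : T.Seq → Prop}
    (top : ∀ σ, T.parentDp σ = none → motive σ)
    (step : ∀ j, ∀ σ ∈ T.seqs j, motive (T.parentSeq j) → motive σ) (σ : T.Seq) : motive σ :=
  match h : T.parentDp σ with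
  | none => top σ h
  | some j =>
    have hσ : σ ∈ T.seqs j := (T.parentDp_spec σ j).1 h
    step j σ hσ (seq_induction top step (T.parentSeq j))
termination_by T.depth σ
decreasing_by exact depth_parentSeq_lt hσ

def IsChoice (T : TFDP) (c : T.Dp → T.Seq) : Prop := ∀ j, c j ∈ T.seqs j

theorem IsChoice.injective {c : T.Dp → T.Seq} (hc : T.IsChoice c) : Function.Injective c :=
  fun j j' h => eq_of_mem_seqs (hc j) (h ▸ hc j')

theorem IsChoice.update {c : T.Dp → T.Seq} (hc : T.IsChoice c) {j : T.Dp} {σ : T.Seq}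
    (hσ : σ ∈ T.seqs j) : T.IsChoice (Function.update c j σ) := by
  intro j'
  rcases eq_or_ne j' j with rfl | hne
  · simpa using hσ
  · simpa [hne] using hc j'

/-- The sequences reached from the roots `R` when the action `c j` is taken at every decision
point `j`. For a set `R` of parentless sequences containing the root this is a pure strategy; for
`R = {σ}` it is the subtree of `σ` under `c`. -/
inductive Reach (T : TFDP) (c : T.Dp → T.Seq) (R : Set T.Seq) : T.Seq → Prop
  | base {σ : T.Seq} : σ ∈ R → Reach T c R σ
  | step {j : T.Dp} : Reach T c R (T.parentSeq j) → Reach T c R (c j)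

variable {c : T.Dp → T.Seq} {R : Set T.Seq}

theorem Reach.mem_or_exists_eq {τ : T.Seq} (h : T.Reach c R τ) : τ ∈ R ∨ ∃ j, τ = c j := by
  cases h with
  | base h => exact .inl h
  | step _ => exact .inr ⟨_, rfl⟩

theorem reach_iff_of_parentDp_eq_none (hc : T.IsChoice c) {τ : T.Seq}
    (hτ : T.parentDp τ = none) : T.Reach c R τ ↔ τ ∈ R := by
  refine ⟨fun h => ?_, .base⟩
  rcases h.mem_or_exists_eq with h | ⟨j, rfl⟩
  · exact h
  · simp [parentDp_eq_some_of_mem (hc j)] at hτ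

theorem reach_iff_of_mem_seqs (hc : T.IsChoice c) {j : T.Dp} {τ : T.Seq} (hτ : τ ∈ T.seqs j) :
    T.Reach c R τ ↔ τ ∈ R ∨ τ = c j ∧ T.Reach c R (T.parentSeq j) := by
  constructor
  · intro h
    cases h with
    | base h => exact .inl h
    | @step j' h =>
      obtain rfl := eq_of_mem_seqs (hc j') hτ
      exact .inr ⟨rfl, h⟩
  · rintro (h | ⟨rfl, h⟩)
    · exact .base h
    · exact .step h

theorem Reach.depth_le (hc : T.IsChoice c) {a τ : T.Seq} (h : T.Reach c {a} τ) :
    T.depth a ≤ T.depth τ := by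
  induction h with
  | base h => rw [Set.mem_singleton_iff.1 h]
  | step _ ih => exact ih.trans (depth_parentSeq_lt (hc _)).le

theorem not_reach_parentSeq (hc : T.IsChoice c) {j : T.Dp} {σ : T.Seq} (hσ : σ ∈ T.seqs j) :
    ¬ T.Reach c {σ} (T.parentSeq j) :=
  fun h => (h.depth_le hc).not_gt (depth_parentSeq_lt hσ)

theorem Reach.congr (hc : T.IsChoice c) {c' : T.Dp → T.Seq} {a τ : T.Seq}
    (hcc : ∀ j, T.depth a ≤ T.depth (T.parentSeq j) → c j = c' j) (h : T.Reach c {a} τ) :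
    T.Reach c' {a} τ := by
  induction h with
  | base h => exact .base h
  | step h ih => rw [hcc _ (h.depth_le hc)]; exact .step ih

theorem exists_isChoice_reach_eq_of_depth_le (hc : T.IsChoice c) (σ : T.Seq) :
    ∃ c', T.IsChoice c' ∧ T.Reach c' {s | T.parentDp s = none} σ ∧
      ∀ j, T.depth σ ≤ T.depth (T.parentSeq j) → c' j = c j := by
  induction σ using seq_induction generalizing c with
  | top σ hσ => exact ⟨c, hc, .base hσ, fun _ _ => rfl⟩
  | step j σ hσ ih =>
    obtain ⟨c', hc', hreach, hagree⟩ := ih (hc.update hσ)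
    have hc'j : c' j = σ := by rw [hagree j le_rfl, Function.update_self]
    refine ⟨c', hc', hc'j ▸ .step hreach, fun j' hj' => ?_⟩
    have hlt := depth_parentSeq_lt hσ
    have hne : j' ≠ j := by rintro rfl; omega
    rw [hagree j' (by omega), Function.update_of_ne hne]

noncomputable def reachIndicator (T : TFDP) (c : T.Dp → T.Seq) (R : Set T.Seq) : T.Seq → ℝ :=
  {τ | T.Reach c R τ}.indicator 1

section Indicator

open scoped Classical

theorem reachIndicator_apply (τ : T.Seq) :
    T.reachIndicator c R τ = if T.Reach c R τ then 1 else 0 := by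
  simp only [reachIndicator, Set.indicator_apply, Set.mem_ofPred_eq, Pi.one_apply]

theorem reachIndicator_of_parentDp_eq_none (hc : T.IsChoice c) {τ : T.Seq}
    (hτ : T.parentDp τ = none) : T.reachIndicator c R τ = R.indicator 1 τ := by
  simp [reachIndicator_apply, reach_iff_of_parentDp_eq_none hc hτ, Set.indicator_apply]

theorem reachIndicator_of_mem_seqs (hc : T.IsChoice c) {j : T.Dp} {τ : T.Seq}
    (hτ : τ ∈ T.seqs j) (hR : τ ∈ R → ¬ T.Reach c R (T.parentSeq j)) :
    T.reachIndicator c R τ =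
      R.indicator 1 τ + if τ = c j then T.reachIndicator c R (T.parentSeq j) else 0 := by
  simp only [reachIndicator_apply, reach_iff_of_mem_seqs hc hτ, Set.indicator_apply,
    Pi.one_apply]
  by_cases hτR : τ ∈ R
  · simp [hτR, hR hτR]
  · by_cases hτc : τ = c j
    · subst hτc; simp [hτR]
    · simp [hτR, hτc]

theorem reachIndicator_of_mem_seqs_of_parentless (hc : T.IsChoice c)
    (hR : ∀ s ∈ R, T.parentDp s = none) {j : T.Dp} {τ : T.Seq} (hτ : τ ∈ T.seqs j) :
    T.reachIndicator c R τ = if τ = c j then T.reachIndicator c R (T.parentSeq j) else 0 := by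
  have hτR : τ ∉ R := fun h => by simpa [parentDp_eq_some_of_mem hτ] using hR τ h
  rw [reachIndicator_of_mem_seqs hc hτ (absurd · hτR), Set.indicator_of_notMem hτR, zero_add]

theorem reachIndicator_singleton_of_mem_seqs (hc : T.IsChoice c) {a : T.Seq} {j : T.Dp}
    {τ : T.Seq} (hτ : τ ∈ T.seqs j) :
    T.reachIndicator c {a} τ = (if τ = a then 1 else 0) +
      if τ = c j then T.reachIndicator c {a} (T.parentSeq j) else 0 := by
  rw [reachIndicator_of_mem_seqs hc hτ (by rintro rfl; exact not_reach_parentSeq hc hτ)]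
  simp [Set.indicator_apply]

theorem reachIndicator_mem_pureStrats (hc : T.IsChoice c) (hR : ∀ s ∈ R, T.parentDp s = none)
    (hroot : T.root ∈ R) : T.reachIndicator c R ∈ T.pureStrats := by
  refine ⟨⟨fun σ => ?_, ?_, fun j => ?_⟩, fun σ => ?_⟩
  · exact Set.indicator_nonneg (fun _ _ => zero_le_one) σ
  · simp [reachIndicator_apply, Reach.base hroot]
  · rw [Finset.sum_congr rfl fun σ hσ => reachIndicator_of_mem_seqs_of_parentless hc hR hσ,
      Finset.sum_ite_eq' _ _ _, if_pos (hc j)]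
  · rw [reachIndicator_apply]
    split_ifs <;> simp

theorem reachIndicator_union (hc : T.IsChoice c) {R₁ R₂ : Set T.Seq}
    (hR : ∀ s ∈ R₁ ∪ R₂, T.parentDp s = none) (hd : Disjoint R₁ R₂) :
    T.reachIndicator c (R₁ ∪ R₂) = T.reachIndicator c R₁ + T.reachIndicator c R₂ := by
  funext τ
  induction τ using seq_induction with
  | top τ hτ =>
    simp only [Pi.add_apply, reachIndicator_of_parentDp_eq_none hc hτ,
      Set.indicator_union_of_disjoint hd]
  | step j τ hτ ih =>
    have h₁ := fun s hs => hR s (Or.inl hs)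
    have h₂ := fun s hs => hR s (Or.inr hs)
    simp only [Pi.add_apply, reachIndicator_of_mem_seqs_of_parentless hc hR hτ,
      reachIndicator_of_mem_seqs_of_parentless hc h₁ hτ,
      reachIndicator_of_mem_seqs_of_parentless hc h₂ hτ]
    split_ifs
    · exact ih
    · simp

theorem reachIndicator_update_add (hc : T.IsChoice c) (hR : ∀ s ∈ R, T.parentDp s = none)
    {j : T.Dp} {σ : T.Seq} (hσ : σ ∈ T.seqs j) (hj : T.Reach c R (T.parentSeq j)) :
    T.reachIndicator (Function.update c j σ) R + T.reachIndicator c {c j} =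
      T.reachIndicator c R + T.reachIndicator c {σ} := by
  have hc' := hc.update hσ
  funext τ
  induction τ using seq_induction with
  | top τ hτ =>
    have hne : ∀ j', τ ≠ c j' := fun j' h => by
      simp [h, parentDp_eq_some_of_mem (hc j')] at hτ
    have hσ' : τ ≠ σ := fun h => by simp [h, parentDp_eq_some_of_mem hσ] at hτ
    simp [reachIndicator_of_parentDp_eq_none hc hτ, reachIndicator_of_parentDp_eq_none hc' hτ,
      hne, hσ']
  | step jt τ hτ ih =>
    simp only [Pi.add_apply, reachIndicator_of_mem_seqs_of_parentless hc hR hτ,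
      reachIndicator_of_mem_seqs_of_parentless hc' hR hτ,
      reachIndicator_singleton_of_mem_seqs hc hτ]
    rcases eq_or_ne jt j with rfl | hne
    · have hcj : T.reachIndicator c {c jt} (T.parentSeq jt) = 0 :=
        Set.indicator_of_notMem (not_reach_parentSeq hc (hc jt)) _
      have hσj : T.reachIndicator c {σ} (T.parentSeq jt) = 0 :=
        Set.indicator_of_notMem (not_reach_parentSeq hc hσ) _
      have hRj : T.reachIndicator c R (T.parentSeq jt) = 1 := Set.indicator_of_mem hj _
      rw [Pi.add_apply, Pi.add_apply, hcj, hσj, hRj, add_zero, add_zero] at ih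
      simp only [Function.update_self, ih, hcj, hσj, hRj]
      split_ifs <;> simp
    · have hτσ : τ ≠ σ := fun h => hne (eq_of_mem_seqs hτ (h ▸ hσ))
      have hτc : τ ≠ c j := fun h => hne (eq_of_mem_seqs hτ (h ▸ hc j))
      simp only [Function.update_of_ne hne, hτσ, hτc, if_false, zero_add]
      split_ifs
      · exact ih
      · simp

theorem reachIndicator_singleton_eq_single_add_sum (hc : T.IsChoice c) (σ : T.Seq) :
    T.reachIndicator c {σ} = Pi.single σ 1 + ∑ j ∈ T.children σ, T.reachIndicator c {c j} := by
  funext τ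
  induction τ using seq_induction with
  | top τ hτ =>
    have hne : ∀ j, τ ≠ c j := fun j h => by simp [h, parentDp_eq_some_of_mem (hc j)] at hτ
    simp [reachIndicator_of_parentDp_eq_none hc hτ, Finset.sum_apply, Pi.single_apply,
      Set.indicator_apply, hne]
  | step jt τ hτ ih =>
    simp only [Pi.add_apply, Finset.sum_apply, reachIndicator_singleton_of_mem_seqs hc hτ] at ih ⊢
    by_cases hτc : τ = c jt
    · subst hτc
      simp only [if_true, ih, Finset.sum_add_distrib, hc.injective.eq_iff, Finset.sum_ite_eq,
        T.mem_children, Pi.single_apply]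
    · have hne : ∀ j, τ ≠ c j := fun j h => by
        obtain rfl := eq_of_mem_seqs (h ▸ hc j) hτ
        exact hτc h
      simp [hτc, hne, Pi.single_apply]

theorem reachIndicator_congr (hc : T.IsChoice c) {c' : T.Dp → T.Seq} (hc' : T.IsChoice c')
    {a : T.Seq} (hcc : ∀ j, T.depth a ≤ T.depth (T.parentSeq j) → c j = c' j) :
    T.reachIndicator c {a} = T.reachIndicator c' {a} := by
  unfold reachIndicator
  congr 2
  ext τ
  exact ⟨Reach.congr hc hcc, Reach.congr hc' fun j h => (hcc j h).symm⟩

theorem dotProduct_reachIndicator_eq_zero {v : T.Seq → ℝ} (hv : ∀ j, v (c j) = 0) (j : T.Dp) :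
    v ⬝ᵥ T.reachIndicator c {c j} = 0 :=
  Finset.sum_eq_zero fun τ _ => by
    by_cases h : T.Reach c {c j} τ
    · rcases h.mem_or_exists_eq with h | ⟨j', rfl⟩
      · rw [Set.mem_singleton_iff.1 h, hv, zero_mul]
      · rw [hv, zero_mul]
    · simp [reachIndicator, h]

end Indicator

section Constant

variable {v : T.Seq → ℝ} {κ : ℝ} (hv : ∀ x ∈ T.pureStrats, v ⬝ᵥ x = κ)
include hv

theorem dotProduct_reachIndicator_root (hc : T.IsChoice c) :
    v ⬝ᵥ T.reachIndicator c {T.root} = κ :=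
  hv _ <| reachIndicator_mem_pureStrats hc (by simp [T.parentDp_root]) rfl

theorem dotProduct_reachIndicator_of_parentDp_eq_none (hc : T.IsChoice c) {σ : T.Seq}
    (hσ : T.parentDp σ = none) (hne : σ ≠ T.root) : v ⬝ᵥ T.reachIndicator c {σ} = 0 := by
  have hR : ∀ s ∈ ({T.root} ∪ {σ} : Set T.Seq), T.parentDp s = none := by
    rintro s (rfl | rfl)
    exacts [T.parentDp_root, hσ]
  have h := hv _ (reachIndicator_mem_pureStrats hc hR (by simp))
  rw [reachIndicator_union hc hR (Set.disjoint_singleton.2 hne.symm), dotProduct_add,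
    dotProduct_reachIndicator_root hv hc] at h
  linarith

theorem dotProduct_reachIndicator_of_mem_seqs (hc : T.IsChoice c) {j : T.Dp} {σ : T.Seq}
    (hσ : σ ∈ T.seqs j) : v ⬝ᵥ T.reachIndicator c {σ} = v ⬝ᵥ T.reachIndicator c {c j} := by
  have hlt := depth_parentSeq_lt hσ
  have hlt' := depth_parentSeq_lt (hc j)
  obtain ⟨c₀, hc₀, hreach, hagree⟩ := exists_isChoice_reach_eq_of_depth_le hc (T.parentSeq j)
  have hR : ∀ s ∈ {s : T.Seq | T.parentDp s = none}, T.parentDp s = none := fun _ => id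
  have h := congrArg (v ⬝ᵥ ·) (reachIndicator_update_add hc₀ hR hσ hreach)
  simp only [dotProduct_add, hv _ (reachIndicator_mem_pureStrats hc₀ hR T.parentDp_root),
    hv _ (reachIndicator_mem_pureStrats (hc₀.update hσ) hR T.parentDp_root),
    hagree j le_rfl] at h
  rw [reachIndicator_congr hc hc₀ fun j' hj' => (hagree j' (by omega)).symm,
    reachIndicator_congr hc hc₀ (a := c j) fun j' hj' => (hagree j' (by omega)).symm]
  linarith

theorem apply_add_elim_eq_sum_children (hc : T.IsChoice c) (σ : T.Seq) :
    v σ + (T.parentDp σ).elim 0 (fun j => -(v ⬝ᵥ T.reachIndicator c {c j})) =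
      (∑ j ∈ T.children σ, -(v ⬝ᵥ T.reachIndicator c {c j})) + if σ = T.root then κ else 0 := by
  have hexp := congrArg (v ⬝ᵥ ·) (reachIndicator_singleton_eq_single_add_sum hc σ)
  simp only [dotProduct_add, dotProduct_sum, dotProduct_single, mul_one] at hexp
  rw [Finset.sum_neg_distrib]
  cases hσ : T.parentDp σ with
  | none =>
    by_cases hr : σ = T.root
    · subst hr
      rw [dotProduct_reachIndicator_root hv hc] at hexp
      simp only [Option.elim_none, if_true]
      linarith
    · rw [dotProduct_reachIndicator_of_parentDp_eq_none hv hc hσ hr] at hexp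
      simp only [Option.elim_none, hr, if_false]
      linarith
  | some j =>
    have hr : σ ≠ T.root := fun h => by simp [h, T.parentDp_root] at hσ
    rw [dotProduct_reachIndicator_of_mem_seqs hv hc ((T.parentDp_spec σ j).1 hσ)] at hexp
    simp only [Option.elim_some, hr, if_false]
    linarith

end Constant

end TFDP

/-- any canonical-row-form matrix `A` representing a linear map `X → co X`
admits a matrix `B` such that `(A, B)` satisfies the UTC constraint system. -/
theorem exists_B_of_canonical (T : TFDP) (A : T.Seq → T.Seq → ℝ)
    (hmap : ∀ x ∈ T.pureStrats, T.mulVec A x ∈ T.poly)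
    (hnn : ∀ σ σ', 0 ≤ A σ σ')
    (hcanon : ∀ (σ : T.Seq) (jt : T.Dp), ∃ σ' ∈ T.seqs jt, A σ σ' = 0) :
    ∃ B : T.Dp → T.Dp → ℝ, T.UTC A B := by
  choose c hc hAc using hcanon
  have hroot (x) (hx : x ∈ T.pureStrats) : A T.root ⬝ᵥ x = 1 := (hmap x hx).2.1
  have hrow (j) (x) (hx : x ∈ T.pureStrats) :
      (A (T.parentSeq j) - ∑ σ ∈ T.seqs j, A σ) ⬝ᵥ x = 0 := by
    rw [sub_dotProduct, sum_dotProduct, sub_eq_zero]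
    exact (hmap x hx).2.2 j
  let B j j' := ∑ σ ∈ T.seqs j, A σ ⬝ᵥ T.reachIndicator (c (T.parentSeq j)) {c (T.parentSeq j) j'}
  have hB (j j') : -((A (T.parentSeq j) - ∑ σ ∈ T.seqs j, A σ) ⬝ᵥ
      T.reachIndicator (c (T.parentSeq j)) {c (T.parentSeq j) j'}) = B j j' := by
    rw [sub_dotProduct, sum_dotProduct,
      TFDP.dotProduct_reachIndicator_eq_zero (hAc (T.parentSeq j)), zero_sub, neg_neg]
  have hroot_row (σ) : A T.root σ = if σ = T.root then 1 else 0 := by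
    have h := TFDP.apply_add_elim_eq_sum_children hroot (hc T.root) σ
    simp only [TFDP.dotProduct_reachIndicator_eq_zero (hAc T.root), neg_zero,
      Finset.sum_const_zero, zero_add] at h
    cases hp : T.parentDp σ <;> simpa [hp] using h
  refine ⟨B, fun j σ => ?_, ?_, fun σ hσ => ?_, hnn, fun j j' => ?_⟩
  · have h := TFDP.apply_add_elim_eq_sum_children (hrow j) (hc (T.parentSeq j)) σ
    simp only [hB, ite_self, Pi.sub_apply, Finset.sum_apply] at h
    rw [TFDP.Bp]
    linarith
  · simpa using hroot_row T.root
  · simpa [hσ] using hroot_row σ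
  · exact Finset.sum_nonneg fun σ _ => dotProduct_nonneg_of_nonneg (hnn σ)
      (Set.indicator_nonneg fun _ _ => zero_le_one)
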